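/- For every x ∈ ℝ², every invertible real 2×2 matrix A, and every measurable ξ : ℝ² × ℝ → ℂ, one has ∫_{ℝ²×ℝ} |(σ₂[x,A]ξ)(ω, ω₃)|² dω dω₃/(‖ω‖²|ω₃|) = |det A| · ∫_{ℝ²×ℝ} |ξ(ω, ω₃)|² dω dω₃/(‖ω‖²|ω₃|), both sides possibly infinite. In particular, if ξ belongs to the domain D_T = {ξ ∈ L²(ℝ²×ℝ;ℂ) : ∫∫ |ξ(ω,ω₃)|²/(‖ω‖²|ω₃|) dω dω₃ < ∞}, then so does σ₂[x,A]ξ. -/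

import Mathlib

open MeasureTheory Matrix
open scoped ENNReal

noncomputable section

/-- `‖ω‖²`, the squared Euclidean norm of the row vector `ω`. -/
def nsq (ω : Fin 2 → ℝ) : ℝ := ω 0 ^ 2 + ω 1 ^ 2

/-- `u_{ω,A}` for a row vector `ω = (ω 0, ω 1)` and a matrix
`A = [[a, b], [c, d]] = [[A 0 0, A 0 1], [A 1 0, A 1 1]]`. -/
def uu (ω : Fin 2 → ℝ) (A : Matrix (Fin 2) (Fin 2) ℝ) : ℝ :=
  ((A 0 0 * A 1 0 + A 0 1 * A 1 1) * (ω 0 ^ 2 - ω 1 ^ 2)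
      - (A 0 0 ^ 2 + A 0 1 ^ 2 - A 1 0 ^ 2 - A 1 1 ^ 2) * (ω 0 * ω 1))
    / ((A 0 0 * ω 0 + A 1 0 * ω 1) ^ 2 + (A 0 1 * ω 0 + A 1 1 * ω 1) ^ 2)

/-- `v_{ω,A}`. -/
def vv (ω : Fin 2 → ℝ) (A : Matrix (Fin 2) (Fin 2) ℝ) : ℝ :=
  ((A 0 0 * A 1 1 - A 0 1 * A 1 0) * (ω 0 ^ 2 + ω 1 ^ 2))
    / ((A 0 0 * ω 0 + A 1 0 * ω 1) ^ 2 + (A 0 1 * ω 0 + A 1 1 * ω 1) ^ 2)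

/-- The operator `σ₂[x,A]` on functions of `(ω, ω₃) ∈ ℝ² × ℝ`:
`(σ₂[x,A]ξ)(ω, ω₃) = (|det A|·‖ω‖/‖ωA‖)·e^{2πi(ω·x + ω₃·u_{ω,A})}·ξ(ωA, ω₃·v_{ω,A})`. -/
def sigma2 (x : Fin 2 → ℝ) (A : Matrix (Fin 2) (Fin 2) ℝ)
    (ξ : (Fin 2 → ℝ) × ℝ → ℂ) : (Fin 2 → ℝ) × ℝ → ℂ := fun p =>
  (((|A.det| * Real.sqrt (nsq p.1) / Real.sqrt (nsq (vecMul p.1 A))) : ℝ) : ℂ)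
    * Complex.exp (((2 * Real.pi * (p.1 0 * x 0 + p.1 1 * x 1 + p.2 * uu p.1 A)) : ℝ) * Complex.I)
    * ξ (vecMul p.1 A, p.2 * vv p.1 A)

/-!
Write `T (ω, t) = (ωA, t·v_{ω,A})`. Since `v_{ω,A} = det A·‖ω‖²/‖ωA‖²`, the modulus of
`σ₂[x,A]ξ` satisfies `|σ₂[x,A]ξ|² = |det A|·|v_{ω,A}|·|ξ ∘ T|²`, and `|det A|·|v_{ω,A}|` is exactly
the Jacobian of `T` (a linear map on `ω` followed by a fibrewise dilation in `t`). Hence `σ₂[x,A]`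
is an isometry of `L²`, and because `‖ωA‖²·|v_{ω,A}| = |det A|·‖ω‖²` the weight `1/(‖ω‖²|t|)`
is `|det A|` times its pullback along `T`, which produces the factor `|det A|` in the weighted
integral.
-/

theorem lintegral_ofReal_abs_mul_comp_mul_right {c : ℝ} (hc : c ≠ 0) (g : ℝ → ℝ≥0∞) :
    ∫⁻ t, ENNReal.ofReal |c| * g (t * c) = ∫⁻ t, g t := by
  have hmap := lintegral_map_equiv g (MeasurableEquiv.mulRight₀ c hc) (μ := volume)
  rw [MeasurableEquiv.coe_mulRight₀, Real.map_volume_mul_right hc, lintegral_smul_measure,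
    smul_eq_mul] at hmap
  rw [lintegral_const_mul' _ _ ENNReal.ofReal_ne_top, ← hmap, ← mul_assoc,
    ← ENNReal.ofReal_mul (abs_nonneg c), abs_inv, mul_inv_cancel₀ (abs_ne_zero.2 hc),
    ENNReal.ofReal_one, one_mul]

theorem map_vecMul_volume {ι : Type*} [Fintype ι] [DecidableEq ι] {A : Matrix ι ι ℝ}
    (hA : A.det ≠ 0) :
    Measure.map (fun ω : ι → ℝ => vecMul ω A) volume = ENNReal.ofReal |A.det|⁻¹ • volume := by
  have hlin : (fun ω : ι → ℝ => vecMul ω A) = toLin' Aᵀ := by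
    ext ω; simp [mulVec_transpose]
  rw [hlin, Real.map_matrix_volume_pi_eq_smul_volume_pi (by rwa [det_transpose]), det_transpose,
    abs_inv]

theorem vecMul_ne_zero_of_det_ne_zero {ι : Type*} [Fintype ι] [DecidableEq ι]
    {A : Matrix ι ι ℝ} (hA : A.det ≠ 0) {ω : ι → ℝ} (hω : ω ≠ 0) : vecMul ω A ≠ 0 :=
  fun h => hA (exists_vecMul_eq_zero_iff.1 ⟨ω, hω, h⟩)

theorem lintegral_prod_skew_dilation {X Y : Type*} [MeasurableSpace X] [MeasurableSpace Y]
    (μ : Measure X) {f : X → Y} {c : X → ℝ} (hf : Measurable f) (hc : Measurable c)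
    (hc0 : ∀ᵐ x ∂μ, c x ≠ 0) {g : Y × ℝ → ℝ≥0∞} (hg : Measurable g) :
    ∫⁻ p, ENNReal.ofReal |c p.1| * g (f p.1, p.2 * c p.1) ∂μ.prod volume
      = ∫⁻ q, g q ∂(μ.map f).prod volume := by
  rw [lintegral_prod _ (by fun_prop), lintegral_prod _ hg.aemeasurable,
    lintegral_map hg.lintegral_prod_right' hf]
  exact lintegral_congr_ae (hc0.mono fun x hx =>
    lintegral_ofReal_abs_mul_comp_mul_right hx fun t => g (f x, t))

section

variable {A : Matrix (Fin 2) (Fin 2) ℝ} {ξ : (Fin 2 → ℝ) × ℝ → ℂ}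

theorem nsq_nonneg (ω : Fin 2 → ℝ) : 0 ≤ nsq ω := by unfold nsq; positivity

theorem nsq_eq_zero_iff {ω : Fin 2 → ℝ} : nsq ω = 0 ↔ ω = 0 := by
  rw [nsq, add_eq_zero_iff_of_nonneg (sq_nonneg _) (sq_nonneg _), sq_eq_zero_iff, sq_eq_zero_iff]
  constructor
  · rintro ⟨h0, h1⟩; ext i; fin_cases i <;> assumption
  · rintro rfl; simp

theorem nsq_vecMul (ω : Fin 2 → ℝ) :
    nsq (vecMul ω A) = (A 0 0 * ω 0 + A 1 0 * ω 1) ^ 2 + (A 0 1 * ω 0 + A 1 1 * ω 1) ^ 2 := by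
  simp only [nsq, vecMul, dotProduct, Fin.sum_univ_two]; ring

theorem vv_eq (ω : Fin 2 → ℝ) : vv ω A = A.det * nsq ω / nsq (vecMul ω A) := by
  rw [vv, nsq_vecMul, det_fin_two, nsq]

theorem abs_vv (ω : Fin 2 → ℝ) : |vv ω A| = |A.det| * nsq ω / nsq (vecMul ω A) := by
  rw [vv_eq, abs_div, abs_mul, abs_of_nonneg (nsq_nonneg _), abs_of_nonneg (nsq_nonneg _)]

theorem vv_ne_zero (hA : A.det ≠ 0) {ω : Fin 2 → ℝ} (hω : ω ≠ 0) : vv ω A ≠ 0 := by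
  rw [vv_eq]
  exact div_ne_zero (mul_ne_zero hA (nsq_eq_zero_iff.not.2 hω))
    (nsq_eq_zero_iff.not.2 (vecMul_ne_zero_of_det_ne_zero hA hω))

theorem nsq_vecMul_mul_abs_vv (hA : A.det ≠ 0) (ω : Fin 2 → ℝ) :
    nsq (vecMul ω A) * |vv ω A| = |A.det| * nsq ω := by
  by_cases hω : ω = 0
  · simp [hω, nsq]
  · rw [abs_vv, mul_div_cancel₀ _ (nsq_eq_zero_iff.not.2 (vecMul_ne_zero_of_det_ne_zero hA hω))]

theorem inv_nsq_mul_abs_eq (hA : A.det ≠ 0) (ω : Fin 2 → ℝ) (t : ℝ) :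
    (nsq ω * |t|)⁻¹ = |A.det| * (nsq (vecMul ω A) * |t * vv ω A|)⁻¹ := by
  rw [abs_mul, mul_left_comm (nsq _), nsq_vecMul_mul_abs_vv hA, mul_comm |t|, mul_assoc,
    mul_inv |A.det|, mul_inv_cancel_left₀ (abs_ne_zero.2 hA)]

theorem norm_sigma2_sq (x : Fin 2 → ℝ) (p : (Fin 2 → ℝ) × ℝ) :
    ‖sigma2 x A ξ p‖ ^ 2 = |A.det| * |vv p.1 A| * ‖ξ (vecMul p.1 A, p.2 * vv p.1 A)‖ ^ 2 := by
  rw [sigma2, norm_mul, norm_mul, Complex.norm_exp_ofReal_mul_I, mul_one, Complex.norm_real,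
    Real.norm_of_nonneg (by positivity), abs_vv, mul_pow, div_pow, mul_pow,
    Real.sq_sqrt (nsq_nonneg _), Real.sq_sqrt (nsq_nonneg _)]
  ring

theorem measurable_sigma2 (x : Fin 2 → ℝ) (hξ : Measurable ξ) :
    Measurable (sigma2 x A ξ) := by
  unfold sigma2 uu vv nsq; fun_prop

theorem lintegral_ofReal_abs_vv_mul_comp (hA : A.det ≠ 0)
    {g : (Fin 2 → ℝ) × ℝ → ℝ≥0∞} (hg : Measurable g) :
    ∫⁻ p : (Fin 2 → ℝ) × ℝ, ENNReal.ofReal |vv p.1 A| * g (vecMul p.1 A, p.2 * vv p.1 A)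
      = ENNReal.ofReal |A.det|⁻¹ * ∫⁻ q, g q := by
  have h0 : ∀ᵐ ω : Fin 2 → ℝ, ω ≠ 0 := compl_mem_ae_iff.2 (measure_singleton 0)
  rw [Measure.volume_eq_prod, lintegral_prod_skew_dilation volume (f := (vecMul · A))
    (c := (vv · A)) (by fun_prop) (by unfold vv; fun_prop) (h0.mono fun _ => vv_ne_zero hA) hg,
    map_vecMul_volume hA, Measure.prod_smul_left, lintegral_smul_measure, smul_eq_mul]

theorem lintegral_nnnorm_sigma2_sq_mul (x : Fin 2 → ℝ) (hA : A.det ≠ 0) (hξ : Measurable ξ)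
    {w : (Fin 2 → ℝ) × ℝ → ℝ≥0∞} (hw : Measurable w) :
    ∫⁻ p : (Fin 2 → ℝ) × ℝ, (‖sigma2 x A ξ p‖₊ : ℝ≥0∞) ^ 2 * w (vecMul p.1 A, p.2 * vv p.1 A)
      = ∫⁻ q, (‖ξ q‖₊ : ℝ≥0∞) ^ 2 * w q := by
  have hpt : ∀ p, (‖sigma2 x A ξ p‖₊ : ℝ≥0∞) ^ 2 * w (vecMul p.1 A, p.2 * vv p.1 A)
      = ENNReal.ofReal |A.det| * (ENNReal.ofReal |vv p.1 A| *
          ((‖ξ (vecMul p.1 A, p.2 * vv p.1 A)‖₊ : ℝ≥0∞) ^ 2 *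
            w (vecMul p.1 A, p.2 * vv p.1 A))) := by
    intro p
    simp only [← enorm_eq_nnnorm, ← ofReal_norm, ← ENNReal.ofReal_pow (norm_nonneg _)]
    rw [norm_sigma2_sq, ENNReal.ofReal_mul (by positivity), ENNReal.ofReal_mul (abs_nonneg _)]
    ring
  rw [lintegral_congr hpt, lintegral_const_mul' _ _ ENNReal.ofReal_ne_top,
    lintegral_ofReal_abs_vv_mul_comp hA (g := fun q => (‖ξ q‖₊ : ℝ≥0∞) ^ 2 * w q) (by fun_prop),
    ← mul_assoc, ← ENNReal.ofReal_mul (abs_nonneg _), mul_inv_cancel₀ (abs_ne_zero.2 hA),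
    ENNReal.ofReal_one, one_mul]

theorem eLpNorm_sigma2 (x : Fin 2 → ℝ) (hA : A.det ≠ 0) (hξ : Measurable ξ) :
    eLpNorm (sigma2 x A ξ) 2 volume = eLpNorm ξ 2 volume := by
  have h := lintegral_nnnorm_sigma2_sq_mul x hA hξ measurable_one
  simp only [Pi.one_apply, mul_one, ← enorm_eq_nnnorm] at h
  simp only [eLpNorm_eq_lintegral_rpow_enorm_toReal two_ne_zero ENNReal.ofNat_ne_top,
    ENNReal.toReal_ofNat, ENNReal.rpow_two, h]

theorem lintegral_nnnorm_sigma2_sq_mul_weight (x : Fin 2 → ℝ) (hA : A.det ≠ 0)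
    (hξ : Measurable ξ) :
    ∫⁻ p : (Fin 2 → ℝ) × ℝ,
        (‖sigma2 x A ξ p‖₊ : ℝ≥0∞) ^ 2 * ENNReal.ofReal (nsq p.1 * |p.2|)⁻¹
      = ENNReal.ofReal |A.det| *
        ∫⁻ p : (Fin 2 → ℝ) × ℝ, (‖ξ p‖₊ : ℝ≥0∞) ^ 2 * ENNReal.ofReal (nsq p.1 * |p.2|)⁻¹ := by
  rw [← lintegral_nnnorm_sigma2_sq_mul x hA hξ (w := fun q => ENNReal.ofReal (nsq q.1 * |q.2|)⁻¹)
      (by unfold nsq; fun_prop), ← lintegral_const_mul' _ _ ENNReal.ofReal_ne_top]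
  refine lintegral_congr fun p => ?_
  rw [inv_nsq_mul_abs_eq hA, ENNReal.ofReal_mul (abs_nonneg _)]
  ring

theorem memLp_sigma2 (x : Fin 2 → ℝ) (hA : A.det ≠ 0) (hξ : Measurable ξ)
    (hmem : MemLp ξ 2 volume) :
    MemLp (sigma2 x A ξ) 2 volume :=
  ⟨(measurable_sigma2 x hξ).aestronglyMeasurable, (eLpNorm_sigma2 x hA hξ).trans_lt hmem.2⟩

end

/-- `σ₂[x,A]` scales the weighted integral `∫∫ |ξ|² dω dω₃/(‖ω‖²|ω₃|)` by `|det A|`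
(both sides possibly infinite); in particular `σ₂[x,A]` maps the domain
`D_T = {ξ ∈ L² : ∫∫ |ξ|²/(‖ω‖²|ω₃|) < ∞}` into itself. -/
theorem sigma2_weighted (x : Fin 2 → ℝ) (A : Matrix (Fin 2) (Fin 2) ℝ)
    (hA : A.det ≠ 0) (ξ : (Fin 2 → ℝ) × ℝ → ℂ) (hξ : Measurable ξ) :
    (∫⁻ p : (Fin 2 → ℝ) × ℝ,
        (‖sigma2 x A ξ p‖₊ : ℝ≥0∞) ^ 2 * ENNReal.ofReal (nsq p.1 * |p.2|)⁻¹
      = ENNReal.ofReal |A.det| *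
        ∫⁻ p : (Fin 2 → ℝ) × ℝ, (‖ξ p‖₊ : ℝ≥0∞) ^ 2 * ENNReal.ofReal (nsq p.1 * |p.2|)⁻¹) ∧
    ((MemLp ξ 2 (volume : Measure ((Fin 2 → ℝ) × ℝ)) ∧
        ∫⁻ p : (Fin 2 → ℝ) × ℝ,
          (‖ξ p‖₊ : ℝ≥0∞) ^ 2 * ENNReal.ofReal (nsq p.1 * |p.2|)⁻¹ < ⊤) →
      (MemLp (sigma2 x A ξ) 2 (volume : Measure ((Fin 2 → ℝ) × ℝ)) ∧
        ∫⁻ p : (Fin 2 → ℝ) × ℝ,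
          (‖sigma2 x A ξ p‖₊ : ℝ≥0∞) ^ 2 * ENNReal.ofReal (nsq p.1 * |p.2|)⁻¹ < ⊤)) := by
  have hweighted := lintegral_nnnorm_sigma2_sq_mul_weight x hA hξ
  refine ⟨hweighted, fun ⟨hmem, hfin⟩ => ⟨memLp_sigma2 x hA hξ hmem, ?_⟩⟩
  rw [hweighted]
  exact ENNReal.mul_lt_top ENNReal.ofReal_lt_top hfin
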